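/- arXiv:1809.09979 — 3 statements merged into one kernel-verified Lean document; each statement's English description precedes it below -/
import Mathlib

section
/- Let S be a ground set and let 𝒞 be a family of subsets of S (the hitting-set instance). Fix k ∈ ℕ. Suppose 𝒞₁ is obtained from 𝒞 as follows: for every pair {a,b} ⊆ S such that more than 6k sets of 𝒞 contain both a and b, all such sets are removed and the set {a,b} is added. Assume additionally that for any three distinct elements of S, at most 6 sets of 𝒞 contain all three. Then a set S' ⊆ S with |S'| ≤ k is a minimum-size hitting set of 𝒞 if and only if it is a minimum-size hitting set of 𝒞₁. -/
/-- `S'` is a hitting set (cover) of the family `𝒞`. -/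
def IsHittingSet {α : Type*} (𝒞 : Finset (Finset α)) (S' : Finset α) : Prop :=
  ∀ M ∈ 𝒞, ∃ x ∈ S', x ∈ M

/-- `S'` is a minimum-size hitting set of `𝒞`. -/
def IsMinHittingSet {α : Type*} (𝒞 : Finset (Finset α)) (S' : Finset α) : Prop :=
  IsHittingSet 𝒞 S' ∧ ∀ T : Finset α, IsHittingSet 𝒞 T → S'.card ≤ T.card

/-- A small hitting set must hit every heavy pair. -/
lemma hit_heavy_pair {α : Type*} [DecidableEq α] (𝒞 : Finset (Finset α)) (k : ℕ)
    (htriple : ∀ a b c : α, a ≠ b → a ≠ c → b ≠ c →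
      (𝒞.filter (fun N => a ∈ N ∧ b ∈ N ∧ c ∈ N)).card ≤ 6)
    (T : Finset α) (hT : IsHittingSet 𝒞 T) (hTk : T.card ≤ k)
    (a b : α) (hab : a ≠ b)
    (hheavy : 6 * k < (𝒞.filter (fun N => a ∈ N ∧ b ∈ N)).card) :
    a ∈ T ∨ b ∈ T := by
  by_contra h
  push_neg at h
  obtain ⟨ha, hb⟩ := h
  have hsub : 𝒞.filter (fun N => a ∈ N ∧ b ∈ N) ⊆
      T.biUnion (fun x => 𝒞.filter (fun N => a ∈ N ∧ b ∈ N ∧ x ∈ N)) := by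
    intro N hN
    simp only [Finset.mem_filter] at hN
    obtain ⟨hN𝒞, haN, hbN⟩ := hN
    obtain ⟨x, hxT, hxN⟩ := hT N hN𝒞
    exact Finset.mem_biUnion.2 ⟨x, hxT, Finset.mem_filter.2 ⟨hN𝒞, haN, hbN, hxN⟩⟩
  have h1 := Finset.card_le_card hsub
  have h2 := Finset.card_biUnion_le (s := T)
    (t := fun x => 𝒞.filter (fun N => a ∈ N ∧ b ∈ N ∧ x ∈ N))
  have h3 : ∑ x ∈ T, (𝒞.filter (fun N => a ∈ N ∧ b ∈ N ∧ x ∈ N)).card ≤ 6 * T.card := by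
    calc ∑ x ∈ T, (𝒞.filter (fun N => a ∈ N ∧ b ∈ N ∧ x ∈ N)).card
        ≤ ∑ _x ∈ T, 6 := Finset.sum_le_sum fun x hx =>
          htriple a b x hab (fun h => ha (h ▸ hx)) (fun h => hb (h ▸ hx))
      _ = 6 * T.card := by rw [Finset.sum_const, smul_eq_mul, mul_comm]
  omega

/-- first kernelization reduction. `𝒞₁` is obtained from `𝒞` by replacing,
for every pair `a ≠ b` contained together in more than `6k` sets of `𝒞`, all those sets
by the single set `{a,b}`. Assuming any three distinct elements lie together in at most
6 sets of `𝒞`, a set `S'` with `|S'| ≤ k` is a minimum-size hitting set of `𝒞` iff it is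
a minimum-size hitting set of `𝒞₁`. -/
theorem minHittingSet_iff_of_pair_reduction
    {α : Type*} [DecidableEq α] (𝒞 𝒞₁ : Finset (Finset α)) (k : ℕ)
    (h𝒞₁ : ∀ M : Finset α, M ∈ 𝒞₁ ↔
      ((M ∈ 𝒞 ∧ ¬ ∃ a b : α, a ≠ b ∧ a ∈ M ∧ b ∈ M ∧
          6 * k < (𝒞.filter (fun N => a ∈ N ∧ b ∈ N)).card) ∨
       (∃ a b : α, a ≠ b ∧
          6 * k < (𝒞.filter (fun N => a ∈ N ∧ b ∈ N)).card ∧ M = {a, b})))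
    (htriple : ∀ a b c : α, a ≠ b → a ≠ c → b ≠ c →
      (𝒞.filter (fun N => a ∈ N ∧ b ∈ N ∧ c ∈ N)).card ≤ 6)
    (S' : Finset α) (hS' : S'.card ≤ k) :
    IsMinHittingSet 𝒞 S' ↔ IsMinHittingSet 𝒞₁ S' := by
  -- any hitting set of 𝒞₁ is a hitting set of 𝒞
  have h1to : ∀ T : Finset α, IsHittingSet 𝒞₁ T → IsHittingSet 𝒞 T := by
    intro T hT M hM
    by_cases hM1 : M ∈ 𝒞₁
    · exact hT M hM1
    · have hne : ∃ a b : α, a ≠ b ∧ a ∈ M ∧ b ∈ M ∧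
          6 * k < (𝒞.filter (fun N => a ∈ N ∧ b ∈ N)).card := by
        by_contra hc
        exact hM1 ((h𝒞₁ M).2 (Or.inl ⟨hM, hc⟩))
      obtain ⟨a, b, hab, haM, hbM, hheavy⟩ := hne
      have hpair : ({a, b} : Finset α) ∈ 𝒞₁ :=
        (h𝒞₁ _).2 (Or.inr ⟨a, b, hab, hheavy, rfl⟩)
      obtain ⟨x, hxT, hx⟩ := hT _ hpair
      rcases Finset.mem_insert.1 hx with h | h
      · exact ⟨x, hxT, h ▸ haM⟩
      · exact ⟨x, hxT, (Finset.mem_singleton.1 h) ▸ hbM⟩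
  -- any small hitting set of 𝒞 is a hitting set of 𝒞₁
  have hto1 : ∀ T : Finset α, IsHittingSet 𝒞 T → T.card ≤ k → IsHittingSet 𝒞₁ T := by
    intro T hT hTk M hM
    rcases (h𝒞₁ M).1 hM with ⟨hM𝒞, _⟩ | ⟨a, b, hab, hheavy, rfl⟩
    · exact hT M hM𝒞
    · rcases hit_heavy_pair 𝒞 k htriple T hT hTk a b hab hheavy with ha | hb
      · exact ⟨a, ha, by simp⟩
      · exact ⟨b, hb, by simp⟩
  constructor
  · rintro ⟨hhit, hmin⟩
    refine ⟨hto1 S' hhit hS', fun T hT => hmin T (h1to T hT)⟩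
  · rintro ⟨hhit, hmin⟩
    refine ⟨h1to S' hhit, fun T hT => ?_⟩
    by_cases hTk : T.card ≤ k
    · exact hmin T (hto1 T hT hTk)
    · omega
end

section
/- Let S be a ground set and 𝒞₁ a family of subsets of S such that every pair of distinct elements of S is contained together in at most 6k sets of 𝒞₁. Let 𝒞₂ be obtained from 𝒞₁ by, for each element s appearing in more than 6k² sets of 𝒞₁, removing all those sets and adding the singleton {s}. Then a set S' ⊆ S with |S'| ≤ k is a minimum-size hitting set of 𝒞₁ if and only if it is a minimum-size hitting set of 𝒞₂. -/
/-- second kernelization reduction. Every pair of distinct elements lies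
together in at most `6k` sets of `𝒞₁`; `𝒞₂` is obtained from `𝒞₁` by replacing, for
each element `s` appearing in more than `6k²` sets of `𝒞₁`, all those sets by the
singleton `{s}`. Then a set `S'` with `|S'| ≤ k` is a minimum-size hitting set of `𝒞₁`
iff it is a minimum-size hitting set of `𝒞₂`. -/
theorem minHittingSet_iff_of_singleton_reduction
    {α : Type*} [DecidableEq α] (𝒞₁ 𝒞₂ : Finset (Finset α)) (k : ℕ)
    (hpair : ∀ a b : α, a ≠ b →
      (𝒞₁.filter (fun N => a ∈ N ∧ b ∈ N)).card ≤ 6 * k)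
    (h𝒞₂ : ∀ M : Finset α, M ∈ 𝒞₂ ↔
      ((M ∈ 𝒞₁ ∧ ¬ ∃ s ∈ M, 6 * k ^ 2 < (𝒞₁.filter (fun N => s ∈ N)).card) ∨
       (∃ s : α, 6 * k ^ 2 < (𝒞₁.filter (fun N => s ∈ N)).card ∧ M = {s})))
    (S' : Finset α) (hS' : S'.card ≤ k) :
    IsMinHittingSet 𝒞₁ S' ↔ IsMinHittingSet 𝒞₂ S' := by
  classical
  -- Key: a small hitting set of 𝒞₁ must contain every high-degree element.
  have key : ∀ T : Finset α, IsHittingSet 𝒞₁ T → T.card ≤ k →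
      ∀ s : α, 6 * k ^ 2 < (𝒞₁.filter (fun N => s ∈ N)).card → s ∈ T := by
    intro T hT hTk s hs
    by_contra hsT
    have hsub : 𝒞₁.filter (fun N => s ∈ N) ⊆
        T.biUnion (fun a => 𝒞₁.filter (fun N => a ∈ N ∧ s ∈ N)) := by
      intro N hN
      simp only [Finset.mem_filter] at hN
      obtain ⟨a, ha, haN⟩ := hT N hN.1
      simp only [Finset.mem_biUnion, Finset.mem_filter]
      exact ⟨a, ha, hN.1, haN, hN.2⟩
    have h1 : (𝒞₁.filter (fun N => s ∈ N)).card ≤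
        ∑ a ∈ T, (𝒞₁.filter (fun N => a ∈ N ∧ s ∈ N)).card :=
      le_trans (Finset.card_le_card hsub) (Finset.card_biUnion_le)
    have h2 : ∑ a ∈ T, (𝒞₁.filter (fun N => a ∈ N ∧ s ∈ N)).card ≤ T.card * (6 * k) := by
      rw [Finset.card_eq_sum_ones T, Finset.sum_mul, one_mul]
      apply Finset.sum_le_sum
      intro a ha
      exact hpair a s (fun h => hsT (h ▸ ha))
    have hlt : 6 * k ^ 2 < k * (6 * k) :=
      lt_of_lt_of_le hs (le_trans h1 (le_trans h2 (Nat.mul_le_mul_right _ hTk)))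
    have heq : k * (6 * k) = 6 * k ^ 2 := by ring
    exact lt_irrefl _ (heq ▸ hlt)
  -- Any hitting set of 𝒞₂ is a hitting set of 𝒞₁.
  have h21 : ∀ T : Finset α, IsHittingSet 𝒞₂ T → IsHittingSet 𝒞₁ T := by
    intro T hT M hM
    by_cases hhigh : ∃ s ∈ M, 6 * k ^ 2 < (𝒞₁.filter (fun N => s ∈ N)).card
    · obtain ⟨s, hsM, hs⟩ := hhigh
      have : ({s} : Finset α) ∈ 𝒞₂ := (h𝒞₂ {s}).2 (Or.inr ⟨s, hs, rfl⟩)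
      obtain ⟨x, hxT, hx⟩ := hT _ this
      rw [Finset.mem_singleton] at hx
      exact ⟨x, hxT, hx ▸ hsM⟩
    · exact hT M ((h𝒞₂ M).2 (Or.inl ⟨hM, hhigh⟩))
  -- A small hitting set of 𝒞₁ is a hitting set of 𝒞₂.
  have h12 : ∀ T : Finset α, IsHittingSet 𝒞₁ T → T.card ≤ k → IsHittingSet 𝒞₂ T := by
    intro T hT hTk M hM
    rcases (h𝒞₂ M).1 hM with ⟨hM1, _⟩ | ⟨s, hs, rfl⟩
    · exact hT M hM1
    · exact ⟨s, key T hT hTk s hs, Finset.mem_singleton_self s⟩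
  constructor
  · rintro ⟨hhit, hmin⟩
    exact ⟨h12 S' hhit hS', fun T hT => hmin T (h21 T hT)⟩
  · rintro ⟨hhit, hmin⟩
    refine ⟨h21 S' hhit, fun T hT => ?_⟩
    by_cases hTk : T.card ≤ k
    · exact hmin T (h12 T hT hTk)
    · omega
end

section
/- Let S be a ground set, 𝒞 a family of subsets, and suppose S'' ⊆ S is a hitting set of 𝒞 avoiding two elements s_i and s_j, where more than 6k sets of 𝒞 contain both s_i and s_j, and where any three distinct elements of S lie together in at most 6 sets of 𝒞. Then |S''| > k. -/
/-- if more than `6k` sets of `𝒞` contain both `sᵢ` and `sⱼ`, any three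
distinct elements lie together in at most 6 sets of `𝒞`, and `S''` is a hitting set of
`𝒞` avoiding both `sᵢ` and `sⱼ`, then `|S''| > k`. -/
theorem hittingSet_card_gt_of_avoiding_heavy_pair
    {α : Type*} [DecidableEq α] (𝒞 : Finset (Finset α)) (k : ℕ) (si sj : α)
    (hij : si ≠ sj)
    (hheavy : 6 * k < (𝒞.filter (fun N => si ∈ N ∧ sj ∈ N)).card)
    (htriple : ∀ a b c : α, a ≠ b → a ≠ c → b ≠ c →
      (𝒞.filter (fun N => a ∈ N ∧ b ∈ N ∧ c ∈ N)).card ≤ 6)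
    (S'' : Finset α) (hhit : IsHittingSet 𝒞 S'')
    (hi : si ∉ S'') (hj : sj ∉ S'') :
    k < S''.card := by
  have hsub : (𝒞.filter (fun N => si ∈ N ∧ sj ∈ N)) ⊆
      S''.biUnion (fun x => 𝒞.filter (fun N => si ∈ N ∧ sj ∈ N ∧ x ∈ N)) := by
    intro M hM
    simp only [Finset.mem_filter] at hM
    obtain ⟨x, hx, hxM⟩ := hhit M hM.1
    exact Finset.mem_biUnion.2 ⟨x, hx, Finset.mem_filter.2 ⟨hM.1, hM.2.1, hM.2.2, hxM⟩⟩
  have h1 : (𝒞.filter (fun N => si ∈ N ∧ sj ∈ N)).card ≤ 6 * S''.card := by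
    calc (𝒞.filter (fun N => si ∈ N ∧ sj ∈ N)).card
        ≤ (S''.biUnion (fun x => 𝒞.filter (fun N => si ∈ N ∧ sj ∈ N ∧ x ∈ N))).card :=
          Finset.card_le_card hsub
      _ ≤ ∑ x ∈ S'', (𝒞.filter (fun N => si ∈ N ∧ sj ∈ N ∧ x ∈ N)).card :=
          Finset.card_biUnion_le
      _ ≤ ∑ _x ∈ S'', 6 := by
          apply Finset.sum_le_sum
          intro x hx
          exact htriple si sj x hij (fun h => hi (h ▸ hx)) (fun h => hj (h ▸ hx))
      _ = 6 * S''.card := by rw [Finset.sum_const, smul_eq_mul, mul_comm]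
  omega
end
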